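/- arXiv:2502.00254 — 2 statements merged into one kernel-verified Lean document; each statement's English description precedes it below -/
import Mathlib

section
/- Let m ≥ 1 and let p be a monic polynomial of degree 2m with all roots real. Then Q_m(Sym(p)) is a monic degree-m polynomial with all roots in ℝ_{≥0}, i.e., Q_m(Sym(p)) ∈ P_m(ℝ_{≥0}). -/
open Polynomial Finset

noncomputable section

namespace FFP

/-- Coefficient `e_k(p)` defined by `p(x) = Σ (-1)^k e_k(p) x^(n-k)`. -/
def eC (n k : ℕ) (p : Polynomial ℂ) : ℂ := (-1) ^ k * p.coeff (n - k)

/-- Falling factorial `x(x-1)⋯(x-k+1)`. -/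
def ffa (x : ℂ) (k : ℕ) : ℂ := ∏ i ∈ Finset.range k, (x - i)

/-- Rising factorial `x(x+1)⋯(x+k-1)`. -/
def rfa (x : ℂ) (k : ℕ) : ℂ := ∏ i ∈ Finset.range k, (x + i)

/-- Monic polynomial of degree `n` from prescribed `e_k` coefficients. -/
def ofE (n : ℕ) (f : ℕ → ℂ) : Polynomial ℂ :=
  ∑ k ∈ Finset.range (n + 1), Polynomial.C ((-1) ^ k * f k) * Polynomial.X ^ (n - k)

/-- Finite free additive convolution. -/
def boxplus (n : ℕ) (p q : Polynomial ℂ) : Polynomial ℂ :=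
  ofE n fun k => ffa (n : ℂ) k * ∑ ij ∈ Finset.HasAntidiagonal.antidiagonal k,
    eC n ij.1 p * eC n ij.2 q / (ffa (n : ℂ) ij.1 * ffa (n : ℂ) ij.2)

/-- Finite free multiplicative convolution. -/
def boxtimes (n : ℕ) (p q : Polynomial ℂ) : Polynomial ℂ :=
  ofE n fun k => eC n k p * eC n k q / (n.choose k : ℂ)

/-- Dilation: `(dil n α p)(x) = α^n p(x/α)` for polynomials of degree ≤ n. -/
def dil (n : ℕ) (α : ℂ) (p : Polynomial ℂ) : Polynomial ℂ :=
  ∑ j ∈ Finset.range (n + 1), Polynomial.C (α ^ (n - j) * p.coeff j) * Polynomial.X ^ j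

/-- Symmetrization. -/
def sym (n : ℕ) (p : Polynomial ℂ) : Polynomial ℂ := boxplus n p (dil n (-1) p)

/-- Degree halving operation. -/
def Qm (m : ℕ) (p : Polynomial ℂ) : Polynomial ℂ :=
  ofE m fun k => (-1) ^ k * eC (2 * m) (2 * k) p

/-- Degree doubling operation. -/
def Sm (p : Polynomial ℂ) : Polynomial ℂ := p.comp (Polynomial.X ^ 2)

/-- Hypergeometric polynomial `H_n[b; a]`. -/
def hyp (n : ℕ) {j i : ℕ} (b : Fin j → ℝ) (a : Fin i → ℝ) : Polynomial ℂ :=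
  ofE n fun k =>
    (n.choose k : ℂ) * (∏ t, ffa ((n : ℂ) * (b t : ℂ)) k) / ∏ s, ffa ((n : ℂ) * (a s : ℂ)) k

/-- Even hypergeometric polynomial `H^E_m[b; a](x) = H_m[b; a](x²)`. -/
def hypE (m : ℕ) {j i : ℕ} (b : Fin j → ℝ) (a : Fin i → ℝ) : Polynomial ℂ :=
  (hyp m b a).comp (Polynomial.X ^ 2)

/-- A monic polynomial of degree `2m` is even: all odd `e`-coefficients vanish. -/
def IsEvenP (m : ℕ) (p : Polynomial ℂ) : Prop :=
  ∀ k ≤ 2 * m, Odd k → eC (2 * m) k p = 0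

lemma sum_C_mul_X_pow_coeff (n : ℕ) (c : ℕ → ℂ) {j : ℕ} (hj : j ≤ n) :
    (∑ k ∈ Finset.range (n + 1), Polynomial.C (c k) * Polynomial.X ^ k).coeff j = c j := by
  rw [finset_sum_coeff, Finset.sum_eq_single j]
  · simp
  · intro k hk hkne
    rw [coeff_C_mul, coeff_X_pow, if_neg (fun h => hkne h.symm), mul_zero]
  · intro h; exact absurd (Finset.mem_range.2 (by omega)) h

lemma ofE_coeff (n : ℕ) (f : ℕ → ℂ) {j : ℕ} (hj : j ≤ n) :
    (ofE n f).coeff j = (-1) ^ (n - j) * f (n - j) := by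
  unfold ofE
  rw [finset_sum_coeff, Finset.sum_eq_single (n - j)]
  · rw [coeff_C_mul, coeff_X_pow, if_pos (by omega), mul_one]
  · intro k hk hkne
    have hk' := Finset.mem_range.1 hk
    rw [coeff_C_mul, coeff_X_pow, if_neg (by omega), mul_zero]
  · intro h; exact absurd (Finset.mem_range.2 (by omega)) h

lemma ofE_coeff_gt (n : ℕ) (f : ℕ → ℂ) {j : ℕ} (hj : n < j) :
    (ofE n f).coeff j = 0 := by
  unfold ofE
  rw [finset_sum_coeff, Finset.sum_eq_zero]
  intro k hk
  have hk' := Finset.mem_range.1 hk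
  rw [coeff_C_mul, coeff_X_pow, if_neg (by omega), mul_zero]

lemma ofE_natDegree_le (n : ℕ) (f : ℕ → ℂ) : (ofE n f).natDegree ≤ n :=
  natDegree_le_iff_coeff_eq_zero.2 fun _ h => ofE_coeff_gt n f h

lemma ofE_monic (n : ℕ) (f : ℕ → ℂ) (hf : f 0 = 1) :
    (ofE n f).Monic ∧ (ofE n f).natDegree = n := by
  have hc : (ofE n f).coeff n = 1 := by
    rw [ofE_coeff n f le_rfl]; simp [hf]
  have hm : (ofE n f).Monic :=
    monic_of_natDegree_le_of_coeff_eq_one n (ofE_natDegree_le n f) hc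
  refine ⟨hm, le_antisymm (ofE_natDegree_le n f) ?_⟩
  exact le_natDegree_of_ne_zero (by rw [hc]; exact one_ne_zero)

lemma ofE_eval (n : ℕ) (f : ℕ → ℂ) (z : ℂ) :
    (ofE n f).eval z = ∑ k ∈ Finset.range (n + 1), (-1) ^ k * f k * z ^ (n - k) := by
  unfold ofE
  rw [eval_finset_sum]
  exact Finset.sum_congr rfl fun k _ => by simp

-- ffa lemmas

lemma ffa_zero (x : ℂ) : ffa x 0 = 1 := by simp [ffa]

lemma ffa_succ (x : ℂ) (k : ℕ) : ffa x (k + 1) = ffa x k * (x - k) := by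
  simp [ffa, Finset.prod_range_succ]

lemma ffa_mul_factorial {n k : ℕ} (h : k ≤ n) :
    ffa (n : ℂ) k * ((n - k).factorial : ℂ) = (n.factorial : ℂ) := by
  induction k with
  | zero => simp [ffa_zero]
  | succ k ih =>
    have hk : k ≤ n := by omega
    have h1 : ((n : ℂ) - k) = ((n - k : ℕ) : ℂ) := by
      push_cast [Nat.cast_sub hk]; ring
    have h2 : (n - k) = (n - (k+1)) + 1 := by omega
    have h3 : ((n - k).factorial : ℂ) = ((n - k : ℕ) : ℂ) * ((n - (k+1)).factorial : ℂ) := by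
      rw [h2, Nat.factorial_succ]; push_cast; ring
    calc ffa (n : ℂ) (k + 1) * ((n - (k+1)).factorial : ℂ)
        = ffa (n : ℂ) k * (((n : ℂ) - k) * ((n - (k+1)).factorial : ℂ)) := by
          rw [ffa_succ]; ring
      _ = ffa (n : ℂ) k * ((n - k).factorial : ℂ) := by rw [h1, ← h3]
      _ = (n.factorial : ℂ) := ih hk

lemma ffa_eq_div {n k : ℕ} (h : k ≤ n) :
    ffa (n : ℂ) k = (n.factorial : ℂ) / ((n - k).factorial : ℂ) := by
  rw [eq_div_iff (by exact_mod_cast (Nat.factorial_ne_zero _))]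
  exact ffa_mul_factorial h

lemma ffa_ne_zero {n k : ℕ} (h : k ≤ n) : ffa (n : ℂ) k ≠ 0 := by
  rw [ffa_eq_div h]
  exact div_ne_zero (by exact_mod_cast (Nat.factorial_ne_zero _))
    (by exact_mod_cast (Nat.factorial_ne_zero _))

lemma key_arith {n i j k : ℕ} (hij : i + j = k) (hk : k ≤ n) :
    ffa (n : ℂ) k * (n.choose i : ℂ) = ((n - j).choose i : ℂ) * (ffa (n : ℂ) i * ffa (n : ℂ) j) := by
  have hi : i ≤ n := by omega
  have hj : j ≤ n := by omega
  have hin : i ≤ n - j := by omega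
  have hd : (n - j) - i = n - k := by omega
  rw [ffa_eq_div hk, ffa_eq_div hi, ffa_eq_div hj, Nat.cast_choose ℂ hi, Nat.cast_choose ℂ hin, hd]
  have f1 : ((n - k).factorial : ℂ) ≠ 0 := by exact_mod_cast Nat.factorial_ne_zero _
  have f2 : ((n - i).factorial : ℂ) ≠ 0 := by exact_mod_cast Nat.factorial_ne_zero _
  have f3 : ((n - j).factorial : ℂ) ≠ 0 := by exact_mod_cast Nat.factorial_ne_zero _
  have f4 : ((i).factorial : ℂ) ≠ 0 := by exact_mod_cast Nat.factorial_ne_zero _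
  field_simp

lemma eC_X_sub_C_pow (n i : ℕ) (hi : i ≤ n) (a : ℂ) :
    eC n i ((X - C a) ^ n) = (n.choose i : ℂ) * a ^ i := by
  have h : (X - C a) ^ n = (X + C (-a)) ^ n := by rw [map_neg, sub_eq_add_neg]
  rw [eC, h, coeff_X_add_C_pow]
  have h1 : n - (n - i) = i := by omega
  rw [h1, Nat.choose_symm hi]
  have h2 : ((-1:ℂ))^i * (-a)^i = a^i := by rw [← mul_pow]; norm_num
  linear_combination (n.choose i : ℂ) * h2

lemma eC_smul (n i : ℕ) (c : ℂ) (p : Polynomial ℂ) : eC n i (c • p) = c * eC n i p := by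
  simp [eC]; ring

lemma eC_add (n i : ℕ) (p q : Polynomial ℂ) : eC n i (p + q) = eC n i p + eC n i q := by
  simp [eC]; ring

lemma boxplus_basis (n : ℕ) (q : Polynomial ℂ) (hq : q.natDegree = n) (a : ℂ) :
    boxplus n ((X - C a) ^ n) q = q.comp (X - C a) := by
  have hcomp : q.comp (X - C a) = ∑ e ∈ Finset.range (n + 1), C (q.coeff e) * (X - C a) ^ e := by
    rw [comp_eq_sum_left]
    exact Polynomial.sum_over_range' _ (by intro i; simp) (n+1) (by omega)
  ext j
  by_cases hj : j ≤ n
  · rw [boxplus, ofE_coeff n _ hj, hcomp]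
    rw [finset_sum_coeff]
    have hRterm : ∀ e ∈ Finset.range (n+1), (C (q.coeff e) * (X - C a) ^ e).coeff j
        = q.coeff e * ((-a) ^ (e - j) * (e.choose j : ℂ)) := by
      intro e _
      rw [coeff_C_mul]
      congr 1
      have h : (X - C a) ^ e = (X + C (-a)) ^ e := by rw [map_neg, sub_eq_add_neg]
      rw [h, coeff_X_add_C_pow]
    rw [Finset.sum_congr rfl hRterm]
    have hsplit : ∑ e ∈ Finset.range (n+1), q.coeff e * ((-a) ^ (e - j) * (e.choose j : ℂ))
        = ∑ t ∈ Finset.range (n - j + 1), q.coeff (j + t) * ((-a) ^ t * ((j+t).choose j : ℂ)) := by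
      rw [Finset.range_eq_Ico, ← Finset.sum_Ico_consecutive _ (Nat.zero_le j) (by omega : j ≤ n+1)]
      have h0 : ∑ e ∈ Finset.Ico 0 j, q.coeff e * ((-a) ^ (e - j) * (e.choose j : ℂ)) = 0 := by
        apply Finset.sum_eq_zero
        intro e he
        have he' : e < j := (Finset.mem_Ico.1 he).2
        rw [Nat.choose_eq_zero_of_lt he']
        simp
      rw [h0, zero_add, Finset.sum_Ico_eq_sum_range]
      have hh : n + 1 - j = n - j + 1 := by omega
      rw [hh, Finset.range_eq_Ico]
      apply Finset.sum_congr rfl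
      intro t _
      have htt : j + t - j = t := by omega
      rw [htt]
    rw [hsplit]
    rw [Finset.Nat.sum_antidiagonal_eq_sum_range_succ_mk, Finset.mul_sum, Finset.mul_sum]
    apply Finset.sum_congr rfl
    intro t ht
    have ht' : t ≤ n - j := by have := Finset.mem_range.1 ht; omega
    have hkey := key_arith (n := n) (i := t) (j := n - j - t) (k := n - j) (by omega) (by omega)
    have hffat : ffa (n:ℂ) t ≠ 0 := ffa_ne_zero (by omega)
    have hffau : ffa (n:ℂ) (n - j - t) ≠ 0 := ffa_ne_zero (by omega)
    rw [eC_X_sub_C_pow n t (by omega) a, eC]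
    have hnjt : n - (n - j - t) = j + t := by omega
    rw [hnjt]
    have hcc : ((j+t).choose j) = ((j+t).choose t) := by
      have h5 := Nat.choose_symm (by omega : t ≤ j + t)
      simpa [show j + t - t = j by omega] using h5
    have hkey2 : ffa (n:ℂ) (n-j) * (n.choose t : ℂ)
        = ((j+t).choose j : ℂ) * (ffa (n:ℂ) t * ffa (n:ℂ) (n - j - t)) := by
      rw [hkey, hnjt, ← hcc]
    have step : ffa (n:ℂ) (n-j) * ((n.choose t : ℂ) * a ^ t * ((-1:ℂ)^(n-j-t) * q.coeff (j+t)) / (ffa (n:ℂ) t * ffa (n:ℂ) (n - j - t)))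
        = ((j+t).choose j : ℂ) * (a ^ t * ((-1:ℂ)^(n-j-t) * q.coeff (j+t))) := by
      field_simp
      linear_combination (a^t * q.coeff (j+t)) * hkey2
    rw [step]
    have hsign : ((-1:ℂ)) ^ (n - j) * (-1:ℂ) ^ (n - j - t) = (-1:ℂ) ^ t := by
      rw [← pow_add]
      have h2 : (n-j) + (n-j-t) = t + 2*(n-j-t) := by omega
      rw [h2, pow_add, pow_mul]
      simp
    rw [neg_pow a t]
    calc ((-1:ℂ))^(n-j) * (((j+t).choose j : ℂ) * (a ^ t * ((-1:ℂ)^(n-j-t) * q.coeff (j+t))))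
        = (((-1:ℂ))^(n-j) * (-1:ℂ)^(n-j-t)) * (((j+t).choose j : ℂ) * a ^ t * q.coeff (j+t)) := by ring
      _ = (-1:ℂ)^t * (((j+t).choose j : ℂ) * a ^ t * q.coeff (j+t)) := by rw [hsign]
      _ = q.coeff (j + t) * ((-1:ℂ) ^ t * a ^ t * ((j+t).choose j : ℂ)) := by ring
  · push_neg at hj
    rw [boxplus, ofE_coeff_gt n _ hj]
    rw [eq_comm]
    apply coeff_eq_zero_of_natDegree_lt
    calc (q.comp (X - C a)).natDegree ≤ q.natDegree * (X - C a).natDegree := natDegree_comp_le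
      _ ≤ n := by rw [hq, natDegree_X_sub_C]; omega
      _ < j := hj


-- ===================== analytic part =====================

/-- One polar-derivative style step. -/

def fstep (z : ℂ) (k : ℕ) (μ : ℂ) (H : Polynomial ℂ) : Polynomial ℂ :=
  (k : ℂ) • H + (C (z - μ) - X) * derivative H

/-- Fold of polar derivative steps along a list of roots. -/

def ffold (z : ℂ) : List ℂ → Polynomial ℂ → Polynomial ℂ
  | [], H => H
  | μ :: t, H => ffold z t (fstep z (t.length + 1) μ H)

lemma fstep_smul (z : ℂ) (k : ℕ) (μ : ℂ) (c : ℂ) (H : Polynomial ℂ) :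
    fstep z k μ (c • H) = c • fstep z k μ H := by
  unfold fstep
  rw [derivative_smul]
  rw [smul_comm (k:ℂ) c H]
  rw [smul_add]
  congr 1
  rw [mul_smul_comm]

lemma fstep_add (z : ℂ) (k : ℕ) (μ : ℂ) (H G : Polynomial ℂ) :
    fstep z k μ (H + G) = fstep z k μ H + fstep z k μ G := by
  unfold fstep
  rw [derivative_add, smul_add]
  ring

lemma ffold_smul (z : ℂ) (l : List ℂ) (c : ℂ) (H : Polynomial ℂ) :
    ffold z l (c • H) = c • ffold z l H := by
  induction l generalizing H with
  | nil => rfl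
  | cons μ t ih => rw [ffold, fstep_smul, ih, ffold]

lemma ffold_add (z : ℂ) (l : List ℂ) (H G : Polynomial ℂ) :
    ffold z l (H + G) = ffold z l H + ffold z l G := by
  induction l generalizing H G with
  | nil => rfl
  | cons μ t ih => rw [ffold, fstep_add, ih, ffold, ffold]

lemma ffold_basis (z a : ℂ) (l : List ℂ) :
    ffold z l ((X - C a) ^ l.length)
      = C ((l.length.factorial : ℂ) * (l.map (fun μ => z - μ - a)).prod) := by
  induction l with
  | nil => simp [ffold]
  | cons μ t ih =>
    have hstep : fstep z (t.length + 1) μ ((X - C a) ^ (t.length + 1))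
        = ((t.length + 1 : ℕ) * (z - μ - a)) • ((X - C a) ^ t.length) := by
      unfold fstep
      rw [derivative_X_sub_C_pow]
      have h1 : (X - C a) ^ (t.length + 1) = (X - C a) * (X - C a) ^ t.length := by
        rw [pow_succ]; ring
      have h2 : (t.length + 1 - 1) = t.length := by omega
      rw [h1, h2]
      simp only [smul_eq_C_mul, C_mul, map_sub]
      push_cast
      ring
    rw [List.length_cons, ffold, hstep, ffold_smul, ih]
    rw [smul_eq_C_mul, ← C_mul]
    congr 1
    rw [List.map_cons, List.prod_cons, Nat.factorial_succ]
    push_cast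
    ring

-- sum over multiset: real/complex helpers

lemma multiset_im_sum (S : Multiset ℂ) : S.sum.im = (S.map Complex.im).sum := by
  induction S using Multiset.induction_on with
  | empty => simp
  | cons a S ih => simp [ih]

lemma multiset_normSq_sum_le (S : Multiset ℂ) :
    Complex.normSq S.sum ≤ (Multiset.card S : ℝ) * (S.map Complex.normSq).sum := by
  induction S using Multiset.induction_on with
  | empty => simp
  | cons a S ih =>
    rcases Multiset.empty_or_exists_mem S with hS | ⟨b, hb⟩
    · subst hS; simp
    · have hm : 1 ≤ (Multiset.card S : ℝ) := by
        have : 1 ≤ Multiset.card S := Multiset.card_pos.2 (fun h => by simp [h] at hb)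
        exact_mod_cast this
      rw [Multiset.sum_cons, Multiset.card_cons, Multiset.map_cons, Multiset.sum_cons]
      rw [Complex.normSq_add]
      set m : ℝ := (Multiset.card S : ℝ)
      set A := ‖a‖
      set B := ‖S.sum‖
      have hre : (a * (starRingEnd ℂ) S.sum).re ≤ A * B := by
        calc (a * (starRingEnd ℂ) S.sum).re ≤ ‖a * (starRingEnd ℂ) S.sum‖ :=
              Complex.re_le_norm _
          _ = A * B := by rw [norm_mul, Complex.norm_conj]
      have hA : Complex.normSq a = A ^ 2 := (Complex.sq_norm a).symm
      have hB : Complex.normSq S.sum = B ^ 2 := (Complex.sq_norm _).symm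
      have hQ : B ^ 2 ≤ m * (S.map Complex.normSq).sum := by rw [← hB]; exact ih
      have hq0 : (0:ℝ) ≤ (S.map Complex.normSq).sum := by
        refine Multiset.sum_nonneg ?_
        intro x hx
        obtain ⟨y, _, rfl⟩ := Multiset.mem_map.1 hx
        exact Complex.normSq_nonneg y
      have hm0 : (0:ℝ) < m := by linarith
      have hAB : (0:ℝ) ≤ A := norm_nonneg a
      have hBB : (0:ℝ) ≤ B := norm_nonneg S.sum
      have step1 : A^2 + B^2 + 2*(A*B) ≤ (m+1)*A^2 + (m+1)*(S.map Complex.normSq).sum := by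
        have hmul : m * (A^2 + B^2 + 2*(A*B))
            ≤ m * ((m+1)*A^2 + (m+1)*(S.map Complex.normSq).sum) := by
          nlinarith [sq_nonneg (m*A - B),
            mul_nonneg (by linarith : (0:ℝ) ≤ m+1)
              (by linarith : (0:ℝ) ≤ m*(S.map Complex.normSq).sum - B^2)]
        exact le_of_mul_le_mul_left hmul hm0
      push_cast
      nlinarith [step1, hre, hA, hB]

lemma multiset_sum_pos (S : Multiset ℝ) (h : ∀ x ∈ S, 0 < x) (hne : S ≠ 0) : 0 < S.sum := by
  induction S using Multiset.induction_on with
  | empty => exact absurd rfl hne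
  | cons a S ih =>
    rcases Multiset.empty_or_exists_mem S with hS | ⟨b, hb⟩
    · subst hS; simpa using h a (by simp)
    · have hpos : 0 < S.sum := ih (fun x hx => h x (Multiset.mem_cons_of_mem hx))
        (fun h0 => by simp [h0] at hb)
      rw [Multiset.sum_cons]
      have := h a (Multiset.mem_cons_self a S)
      linarith

lemma eval_derivative_multiset_prod (s : Multiset ℂ) (x : ℂ) (hx : ∀ w ∈ s, x ≠ w) :
    eval x (derivative (s.map (fun w => X - C w)).prod)
      = (s.map (fun w => (x - w)⁻¹)).sum * eval x ((s.map (fun w => X - C w)).prod) := by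
  induction s using Multiset.induction_on with
  | empty => simp
  | cons a s ih =>
    have hxa : x - a ≠ 0 := sub_ne_zero.2 (hx a (Multiset.mem_cons_self a s))
    have ih' := ih (fun w hw => hx w (Multiset.mem_cons_of_mem hw))
    rw [Multiset.map_cons, Multiset.prod_cons, derivative_mul, derivative_sub, derivative_X,
      derivative_C, sub_zero, one_mul]
    rw [eval_add, eval_mul, eval_sub, eval_X, eval_C, ih']
    rw [Multiset.map_cons, Multiset.sum_cons, eval_mul, eval_sub, eval_X, eval_C]
    field_simp

lemma multiset_chi_sum (S : Multiset ℂ) (d : ℝ) (f : ℂ → ℂ) :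
    (S.map (fun v => (f v).im - d * Complex.normSq (f v))).sum
      = (S.map (fun v => (f v).im)).sum - d * (S.map (fun v => Complex.normSq (f v))).sum := by
  induction S using Multiset.induction_on with
  | empty => simp
  | cons a S ih =>
    simp only [Multiset.map_cons, Multiset.sum_cons, ih]
    ring

lemma fstep_natDegree_le (z : ℂ) (k : ℕ) (hk : 1 ≤ k) (μ : ℂ) (H : Polynomial ℂ)
    (hdeg : H.natDegree ≤ k) : (fstep z k μ H).natDegree ≤ k - 1 := by
  apply natDegree_le_iff_coeff_eq_zero.2
  intro N hN
  have hNk : k ≤ N := by omega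
  have hN1 : 1 ≤ N := by omega
  unfold fstep
  rw [coeff_add, coeff_smul, sub_mul, coeff_sub, coeff_C_mul]
  have hXmul : (X * derivative H).coeff N = (derivative H).coeff (N - 1) := by
    have h : N = (N - 1) + 1 := by omega
    conv_lhs => rw [h]
    rw [coeff_X_mul]
  rw [hXmul, coeff_derivative, coeff_derivative]
  have h1 : N - 1 + 1 = N := by omega
  rw [h1]
  have hc1 : H.coeff (N + 1) = 0 := coeff_eq_zero_of_natDegree_lt (by omega)
  have hcast : ((N - 1 : ℕ) : ℂ) = (N : ℂ) - 1 := by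
    push_cast [Nat.cast_sub hN1]
    ring
  by_cases hNek : N = k
  · subst hNek
    rw [hc1, hcast]
    simp only [smul_eq_mul, mul_zero, zero_mul]
    ring
  · have hc0 : H.coeff N = 0 := coeff_eq_zero_of_natDegree_lt (by omega)
    rw [hc0, hc1]
    simp

lemma fstep_good (z : ℂ) (k : ℕ) (hk : 1 ≤ k) (μ : ℂ) (hμ : μ.im = 0) (H : Polynomial ℂ)
    (hne : H ≠ 0) (hdeg : H.natDegree ≤ k) (hroots : ∀ w, H.IsRoot w → z.im < w.im) :
    fstep z k μ H ≠ 0 ∧ (fstep z k μ H).natDegree ≤ k - 1 ∧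
      (∀ w, (fstep z k μ H).IsRoot w → z.im < w.im) := by
  have main : ∀ w : ℂ, w.im ≤ z.im → (fstep z k μ H).eval w ≠ 0 := by
    intro w hw
    have hHw : H.eval w ≠ 0 := by
      intro h0
      exact absurd (hroots w h0) (by linarith)
    have hsplits : Multiset.card H.roots = H.natDegree :=
      (Polynomial.splits_iff_card_roots.1 (IsAlgClosed.splits H))
    have hfact : Polynomial.C H.leadingCoeff * (H.roots.map fun a => X - C a).prod = H :=
      C_leadingCoeff_mul_prod_multiset_X_sub_C hsplits
    have hwroot : ∀ v ∈ H.roots, w ≠ v := by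
      intro v hv hveq
      have h2 : z.im < v.im := hroots v (isRoot_of_mem_roots hv)
      rw [← hveq] at h2
      linarith
    have hevalH : H.eval w
        = H.leadingCoeff * eval w ((H.roots.map fun a => X - C a).prod) := by
      conv_lhs => rw [← hfact]
      rw [eval_mul, eval_C]
    have hder : (derivative H).eval w
        = (H.roots.map fun v => (w - v)⁻¹).sum * H.eval w := by
      conv_lhs => rw [← hfact]
      rw [derivative_C_mul, eval_mul, eval_C, eval_derivative_multiset_prod _ _ hwroot, hevalH]
      ring
    intro heval
    have heq : (k : ℂ) * H.eval w + ((z - μ) - w) * (derivative H).eval w = 0 := by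
      have h3 : (fstep z k μ H).eval w
          = (k : ℂ) * H.eval w + ((z - μ) - w) * (derivative H).eval w := by
        unfold fstep
        simp only [eval_add, eval_mul, eval_smul, eval_sub, eval_C, eval_X, smul_eq_mul]
      rw [← h3, heval]
    rw [hder] at heq
    set T : ℂ := (H.roots.map fun v => (w - v)⁻¹).sum with hT
    have heq2 : (k : ℂ) + ((z - μ) - w) * T = 0 := by
      have h4 : H.eval w * ((k : ℂ) + ((z - μ) - w) * T) = 0 := by linear_combination heq
      rcases mul_eq_zero.1 h4 with h | h
      · exact absurd h hHw
      · exact h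
    have hkC : (k : ℂ) ≠ 0 := by
      exact_mod_cast Nat.pos_iff_ne_zero.1 hk
    have hRne : H.roots ≠ 0 := by
      intro h0
      rw [hT, h0] at heq2
      simp at heq2
      exact hkC (by exact_mod_cast heq2)
    have hune : w - (z - μ) ≠ 0 := by
      intro h0
      apply hkC
      have h5 : ((z - μ) - w) = -(w - (z - μ)) := by ring
      rw [h5, h0] at heq2
      simpa using heq2
    have huim : (w - (z - μ)).im = w.im - z.im := by simp [hμ]
    have hTeq : T = (k : ℂ) * (w - (z - μ))⁻¹ := by
      have h5 : (w - (z - μ)) * T = (k : ℂ) := by linear_combination -heq2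
      field_simp
      linear_combination h5
    have hd0 : (0:ℝ) ≤ z.im - w.im := by linarith
    have hNu0 : 0 < Complex.normSq (w - (z - μ)) := Complex.normSq_pos.2 hune
    -- positive chi sum
    have hSchipos :
        0 < (H.roots.map (fun v =>
          ((w - v)⁻¹).im - (z.im - w.im) * Complex.normSq ((w - v)⁻¹))).sum := by
      apply multiset_sum_pos
      · intro x hx
        obtain ⟨v, hv, rfl⟩ := Multiset.mem_map.1 hx
        have hzv : z.im < v.im := hroots v (isRoot_of_mem_roots hv)
        have hwv : w - v ≠ 0 := sub_ne_zero.2 (hwroot v hv)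
        have hNv : 0 < Complex.normSq (w - v) := Complex.normSq_pos.2 hwv
        have hcalc : ((w - v)⁻¹).im - (z.im - w.im) * Complex.normSq ((w - v)⁻¹)
            = (v.im - z.im) / Complex.normSq (w - v) := by
          rw [Complex.inv_im, Complex.normSq_inv, Complex.sub_im]
          field_simp
          all_goals ring
        rw [hcalc]
        exact div_pos (by linarith) hNv
      · simp only [ne_eq, Multiset.map_eq_zero]
        exact hRne
    have hchisum : (H.roots.map (fun v =>
          ((w - v)⁻¹).im - (z.im - w.im) * Complex.normSq ((w - v)⁻¹))).sum
        = T.im - (z.im - w.im) * (H.roots.map (fun v => Complex.normSq ((w - v)⁻¹))).sum := by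
      rw [multiset_chi_sum H.roots (z.im - w.im) (fun v => (w - v)⁻¹)]
      have him : T.im = (H.roots.map (fun v => ((w - v)⁻¹).im)).sum := by
        rw [hT, multiset_im_sum, Multiset.map_map]
        rfl
      rw [him]
    have hSn0 : (0:ℝ) ≤ (H.roots.map (fun v => Complex.normSq ((w - v)⁻¹))).sum := by
      apply Multiset.sum_nonneg
      intro x hx
      obtain ⟨v, _, rfl⟩ := Multiset.mem_map.1 hx
      exact Complex.normSq_nonneg _
    have hCS : Complex.normSq T
        ≤ (Multiset.card H.roots : ℝ) * (H.roots.map (fun v => Complex.normSq ((w - v)⁻¹))).sum := by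
      have h6 := multiset_normSq_sum_le (H.roots.map fun v => (w - v)⁻¹)
      rw [Multiset.card_map, Multiset.map_map] at h6
      exact h6
    have hcard : (Multiset.card H.roots : ℝ) ≤ (k : ℝ) := by
      rw [hsplits]
      exact_mod_cast hdeg
    have hCS2 : Complex.normSq T
        ≤ (k : ℝ) * (H.roots.map (fun v => Complex.normSq ((w - v)⁻¹))).sum :=
      le_trans hCS (mul_le_mul_of_nonneg_right hcard hSn0)
    have hk0 : (0:ℝ) < (k : ℝ) := by exact_mod_cast hk
    -- compute T.im and normSq T
    have hTim : T.im = (k : ℝ) * (z.im - w.im) / Complex.normSq (w - (z - μ)) := by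
      rw [hTeq]
      simp only [Complex.mul_im, Complex.natCast_re, Complex.natCast_im, zero_mul, add_zero]
      rw [Complex.inv_im, huim]
      field_simp
      all_goals ring
    have hTnorm : Complex.normSq T = (k : ℝ)^2 / Complex.normSq (w - (z - μ)) := by
      rw [hTeq, Complex.normSq_mul, Complex.normSq_inv]
      have h7 : Complex.normSq ((k : ℕ) : ℂ) = (k : ℝ)^2 := by
        simp [Complex.normSq_apply]
        ring
      rw [h7]
      field_simp
    -- final contradiction
    have h8 : (z.im - w.im) * (Complex.normSq T / (k : ℝ))
        ≤ (z.im - w.im) * (H.roots.map (fun v => Complex.normSq ((w - v)⁻¹))).sum := by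
      apply mul_le_mul_of_nonneg_left _ hd0
      rw [div_le_iff₀ hk0]
      calc Complex.normSq T ≤ (k:ℝ) * (H.roots.map (fun v => Complex.normSq ((w - v)⁻¹))).sum :=
            hCS2
        _ = (H.roots.map (fun v => Complex.normSq ((w - v)⁻¹))).sum * (k:ℝ) := by ring
    have h10 : T.im - (z.im - w.im) * (Complex.normSq T / (k : ℝ)) = 0 := by
      rw [hTim, hTnorm]
      field_simp
      ring
    rw [hchisum] at hSchipos
    linarith
  -- assemble the three conclusions
  refine ⟨?_, fstep_natDegree_le z k hk μ H hdeg, ?_⟩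
  · intro h0
    have h11 := main (z - μ) (by simp [hμ])
    rw [h0] at h11
    simp at h11
  · intro w hwroot
    by_contra hcon
    push_neg at hcon
    exact main w hcon hwroot

lemma ffold_good (z : ℂ) : ∀ (l : List ℂ) (H : Polynomial ℂ), (∀ μ ∈ l, μ.im = 0) → H ≠ 0 →
    H.natDegree ≤ l.length → (∀ w, H.IsRoot w → z.im < w.im) →
    ffold z l H ≠ 0 ∧ (ffold z l H).natDegree ≤ 0 := by
  intro l
  induction l with
  | nil =>
    intro H _ hne hdeg _
    exact ⟨hne, by simpa [ffold] using hdeg⟩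
  | cons μ t ih =>
    intro H hmem hne hdeg hroots
    have hg := fstep_good z (t.length + 1) (by omega) μ (hmem μ List.mem_cons_self) H hne
      (by simpa using hdeg) hroots
    rw [ffold]
    exact ih _ (fun ν hν => hmem ν (List.mem_cons_of_mem μ hν)) hg.1
      (by simpa using hg.2.1) hg.2.2

lemma ofE_add (n : ℕ) (f g : ℕ → ℂ) :
    ofE n (fun k => f k + g k) = ofE n f + ofE n g := by
  unfold ofE
  rw [← Finset.sum_add_distrib]
  apply Finset.sum_congr rfl
  intro k _
  rw [mul_add, C_add]
  ring

lemma ofE_mul (n : ℕ) (c : ℂ) (f : ℕ → ℂ) :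
    ofE n (fun k => c * f k) = C c * ofE n f := by
  unfold ofE
  rw [Finset.mul_sum]
  apply Finset.sum_congr rfl
  intro k _
  rw [show (-1:ℂ)^k * (c * f k) = c * ((-1)^k * f k) by ring, C_mul]
  ring

lemma boxplus_add_left (n : ℕ) (p₁ p₂ q : Polynomial ℂ) :
    boxplus n (p₁ + p₂) q = boxplus n p₁ q + boxplus n p₂ q := by
  unfold boxplus
  rw [← ofE_add]
  congr 1
  funext k
  rw [← mul_add, ← Finset.sum_add_distrib]
  congr 1
  apply Finset.sum_congr rfl
  intro ij _
  rw [eC_add]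
  ring

lemma boxplus_smul_left (n : ℕ) (c : ℂ) (p q : Polynomial ℂ) :
    boxplus n (c • p) q = C c * boxplus n p q := by
  unfold boxplus
  rw [← ofE_mul]
  congr 1
  funext k
  rw [Finset.mul_sum, Finset.mul_sum, Finset.mul_sum]
  apply Finset.sum_congr rfl
  intro ij _
  rw [eC_smul]
  ring

lemma ffold_zero (z : ℂ) (l : List ℂ) : ffold z l 0 = 0 := by
  have h := ffold_smul z l 0 0
  simpa using h

lemma walsh_lower (n : ℕ) (p q : Polynomial ℂ) (hp : p.Monic) (hpd : p.natDegree = n)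
    (hq : q.Monic) (hqd : q.natDegree = n)
    (hpr : ∀ w, p.IsRoot w → w.im = 0) (hqr : ∀ w, q.IsRoot w → w.im = 0)
    (z : ℂ) (hz : z.im < 0) : (boxplus n p q).eval z ≠ 0 := by
  have hcard : Multiset.card q.roots = n := by
    rw [Polynomial.splits_iff_card_roots.1 (IsAlgClosed.splits q), hqd]
  set l : List ℂ := q.roots.toList with hl
  have hql : (l : Multiset ℂ) = q.roots := Multiset.coe_toList _
  have hlen : l.length = n := by
    rw [hl, Multiset.length_toList, hcard]
  set Φ : Polynomial ℂ → ℂ :=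
    fun f => (n.factorial : ℂ) * (boxplus n f q).eval z - (ffold z l f).coeff 0 with hΦ
  have hΦadd : ∀ f g, Φ (f + g) = Φ f + Φ g := by
    intro f g
    rw [hΦ]
    simp only [boxplus_add_left, eval_add, ffold_add, coeff_add]
    ring
  have hΦsmul : ∀ (c : ℂ) f, Φ (c • f) = c * Φ f := by
    intro c f
    rw [hΦ]
    simp only [boxplus_smul_left, eval_mul, eval_C, ffold_smul, coeff_smul, smul_eq_mul]
    ring
  have hΦzero : Φ 0 = 0 := by
    have h := hΦsmul 0 0
    simpa using h
  have hΦsum : ∀ (s : Finset ℕ) (F : ℕ → Polynomial ℂ),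
      Φ (∑ i ∈ s, F i) = ∑ i ∈ s, Φ (F i) := by
    intro s F
    induction s using Finset.induction_on with
    | empty => simpa using hΦzero
    | insert x s hx ih =>
      rw [Finset.sum_insert hx, Finset.sum_insert hx, hΦadd, ih]
  -- basis vanishing
  have hqfact : (q.roots.map fun a => X - C a).prod = q :=
    prod_multiset_X_sub_C_of_monic_of_roots_card_eq hq (by rw [hcard, hqd])
  have hbasis : ∀ a : ℂ, Φ ((X - C a) ^ n) = 0 := by
    intro a
    simp only [hΦ]
    have h1 : (boxplus n ((X - C a) ^ n) q).eval z
        = (q.roots.map (fun v => z - a - v)).prod := by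
      rw [boxplus_basis n q hqd a, eval_comp]
      rw [eval_sub, eval_X, eval_C]
      conv_lhs => rw [← hqfact]
      rw [eval_multiset_prod, Multiset.map_map]
      congr 1
      apply Multiset.map_congr rfl
      intro v _
      simp
    have h2 : (ffold z l ((X - C a) ^ n)).coeff 0
        = (n.factorial : ℂ) * (q.roots.map (fun v => z - a - v)).prod := by
      rw [← hlen, ffold_basis, coeff_C_zero]
      congr 1
      have hfun : (fun μ : ℂ => z - μ - a) = (fun v : ℂ => z - a - v) := by
        funext v; ring
      rw [hfun, ← hql, Multiset.map_coe, Multiset.prod_coe]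
    rw [h1, h2]
    ring
  -- monomials vanish
  have hmono : ∀ j, j ≤ n → Φ (X ^ j) = 0 := by
    have hgdef : ∀ a : ℂ,
        (∑ k ∈ Finset.range (n+1),
          C ((-1)^k * ((n.choose (n-k) : ℂ)) * Φ (X ^ (n-k))) * X ^ k).eval a = 0 := by
      intro a
      have hexp : (X - C a) ^ n
          = ∑ e ∈ Finset.range (n+1), ((-a)^(n-e) * (n.choose e : ℂ)) • X ^ e := by
        ext N
        rw [finset_sum_coeff]
        by_cases hN : N ≤ n
        · have hone : (X - C a) ^ n = (X + C (-a)) ^ n := by rw [map_neg, sub_eq_add_neg]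
          rw [hone, coeff_X_add_C_pow]
          rw [Finset.sum_eq_single N]
          · rw [coeff_smul, coeff_X_pow, if_pos rfl]
            simp [mul_comm]
          · intro e he hne
            rw [coeff_smul, coeff_X_pow, if_neg (fun hh => hne hh.symm), smul_zero]
          · intro hNe
            exact absurd (Finset.mem_range.2 (by omega)) hNe
        · push_neg at hN
          have hdeg1 : ((X - C a) ^ n).natDegree ≤ n := by
            calc ((X - C a) ^ n).natDegree ≤ n * (X - C a).natDegree := natDegree_pow_le
              _ ≤ n := by rw [natDegree_X_sub_C]; omega
          rw [coeff_eq_zero_of_natDegree_lt (by omega : ((X - C a)^n).natDegree < N)]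
          rw [eq_comm]
          apply Finset.sum_eq_zero
          intro e he
          rw [coeff_smul, coeff_X_pow, if_neg (by have := Finset.mem_range.1 he; omega),
            smul_zero]
      have hPhiexp : Φ ((X - C a) ^ n)
          = ∑ e ∈ Finset.range (n+1), ((-a)^(n-e) * (n.choose e : ℂ)) * Φ (X ^ e) := by
        rw [hexp, hΦsum]
        apply Finset.sum_congr rfl
        intro e _
        rw [hΦsmul]
      have hrefl : ∑ e ∈ Finset.range (n+1), ((-a)^(n-e) * (n.choose e : ℂ)) * Φ (X ^ e)
          = ∑ k ∈ Finset.range (n+1), ((-a)^k * (n.choose (n-k) : ℂ)) * Φ (X ^ (n-k)) := by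
        rw [← Finset.sum_range_reflect]
        apply Finset.sum_congr rfl
        intro k hk
        have hk' : k ≤ n := by have := Finset.mem_range.1 hk; omega
        have h5 : n + 1 - 1 - k = n - k := by omega
        have h6 : n - (n - k) = k := by omega
        rw [h5, h6]
      rw [eval_finset_sum]
      have := hbasis a
      rw [hPhiexp, hrefl] at this
      rw [← this]
      apply Finset.sum_congr rfl
      intro k _
      rw [eval_mul, eval_C, eval_pow, eval_X]
      rw [neg_pow]
      ring
    have hgzero : (∑ k ∈ Finset.range (n+1),
        C ((-1)^k * ((n.choose (n-k) : ℂ)) * Φ (X ^ (n-k))) * X ^ k) = 0 := by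
      apply Polynomial.eq_zero_of_infinite_isRoot
      have huniv : {x : ℂ | Polynomial.IsRoot _ x} = Set.univ :=
        Set.eq_univ_of_forall (fun a => hgdef a)
      rw [huniv]
      exact Set.infinite_univ
    intro j hj
    have hcoeff := sum_C_mul_X_pow_coeff n
      (fun k => (-1)^k * ((n.choose (n-k) : ℂ)) * Φ (X ^ (n-k))) (show n - j ≤ n by omega)
    rw [hgzero] at hcoeff
    simp only [coeff_zero] at hcoeff
    have hjj : n - (n - j) = j := by omega
    rw [hjj] at hcoeff
    have hchoose : ((n.choose j : ℂ)) ≠ 0 := by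
      exact_mod_cast Nat.pos_iff_ne_zero.1 (Nat.choose_pos hj)
    have hsgn : ((-1:ℂ))^(n-j) ≠ 0 := by
      apply pow_ne_zero; norm_num
    rcases mul_eq_zero.1 hcoeff.symm with h | h
    · rcases mul_eq_zero.1 h with h' | h'
      · exact absurd h' hsgn
      · exact absurd h' hchoose
    · exact h
  -- expand p
  have hpexp : p = ∑ j ∈ Finset.range (n+1), (p.coeff j) • X ^ j := by
    conv_lhs => rw [Polynomial.as_sum_range' p (n+1) (by omega)]
    apply Finset.sum_congr rfl
    intro j _
    rw [Polynomial.smul_X_eq_monomial]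
  have hΦp : Φ p = 0 := by
    conv_lhs => rw [hpexp]
    rw [hΦsum]
    apply Finset.sum_eq_zero
    intro j hj
    rw [hΦsmul, hmono j (by have := Finset.mem_range.1 hj; omega), mul_zero]
  -- conclude
  intro heval
  have hcoeff0 : (ffold z l p).coeff 0 = 0 := by
    have h12 : Φ p = (n.factorial : ℂ) * (boxplus n p q).eval z - (ffold z l p).coeff 0 := rfl
    rw [hΦp, heval, mul_zero] at h12
    linear_combination h12
  have hgood := ffold_good z l p
    (fun μ hμ => hqr μ (isRoot_of_mem_roots (Multiset.mem_toList.1 hμ)))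
    hp.ne_zero (by rw [hpd, hlen]) (fun w hw => by rw [hpr w hw]; linarith)
  apply hgood.1
  have h13 := eq_C_of_natDegree_le_zero hgood.2
  rw [h13, hcoeff0, map_zero]

lemma selfconj_of_real_rooted (p : Polynomial ℂ) (hp : p.Monic)
    (hr : ∀ w, p.IsRoot w → w.im = 0) : p.map (starRingEnd ℂ) = p := by
  have hcard : Multiset.card p.roots = p.natDegree :=
    Polynomial.splits_iff_card_roots.1 (IsAlgClosed.splits p)
  have hfact : (p.roots.map fun a => X - C a).prod = p :=
    prod_multiset_X_sub_C_of_monic_of_roots_card_eq hp hcard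
  conv_lhs => rw [← hfact]
  conv_rhs => rw [← hfact]
  rw [Polynomial.map_multiset_prod, Multiset.map_map]
  congr 1
  apply Multiset.map_congr rfl
  intro v hv
  have hvim : v.im = 0 := hr v (isRoot_of_mem_roots hv)
  have hconj : (starRingEnd ℂ) v = v := Complex.conj_eq_iff_im.2 hvim
  simp [hconj]

lemma coeff_selfconj {p : Polynomial ℂ} (hp : p.map (starRingEnd ℂ) = p) (j : ℕ) :
    (starRingEnd ℂ) (p.coeff j) = p.coeff j := by
  conv_rhs => rw [← hp]
  rw [coeff_map]

lemma ffa_conj (n k : ℕ) : (starRingEnd ℂ) (ffa (n : ℂ) k) = ffa (n : ℂ) k := by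
  unfold ffa
  rw [map_prod]
  apply Finset.prod_congr rfl
  intro i _
  simp

lemma eC_conj {p : Polynomial ℂ} (hp : p.map (starRingEnd ℂ) = p) (n i : ℕ) :
    (starRingEnd ℂ) (eC n i p) = eC n i p := by
  unfold eC
  rw [map_mul, map_pow, map_neg, map_one, coeff_selfconj hp]

lemma boxplus_selfconj (n : ℕ) {p q : Polynomial ℂ} (hp : p.map (starRingEnd ℂ) = p)
    (hq : q.map (starRingEnd ℂ) = q) :
    (boxplus n p q).map (starRingEnd ℂ) = boxplus n p q := by
  ext j
  rw [coeff_map]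
  by_cases hj : j ≤ n
  · rw [boxplus, ofE_coeff n _ hj]
    rw [map_mul, map_mul, map_pow, map_neg, map_one, map_sum]
    congr 2
    · exact ffa_conj n (n - j)
    · apply Finset.sum_congr rfl
      intro ij _
      rw [map_div₀, map_mul, map_mul, eC_conj hp, eC_conj hq, ffa_conj, ffa_conj]
  · rw [boxplus, ofE_coeff_gt n _ (j := j) (by omega), map_zero]

lemma conj_root {r : Polynomial ℂ} (hr : r.map (starRingEnd ℂ) = r) {z : ℂ}
    (hz : r.IsRoot z) : r.IsRoot ((starRingEnd ℂ) z) := by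
  unfold IsRoot at hz ⊢
  conv_lhs => rw [← hr]
  rw [eval_map, Polynomial.eval₂_at_apply, hz, map_zero]

/-- Walsh's theorem for the finite free additive convolution. -/

lemma walsh_real (n : ℕ) (p q : Polynomial ℂ) (hp : p.Monic) (hpd : p.natDegree = n)
    (hq : q.Monic) (hqd : q.natDegree = n)
    (hpr : ∀ w, p.IsRoot w → w.im = 0) (hqr : ∀ w, q.IsRoot w → w.im = 0) :
    ∀ w, (boxplus n p q).IsRoot w → w.im = 0 := by
  intro w hw
  by_contra hne
  rcases lt_or_gt_of_ne hne with hlt | hgt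
  · exact walsh_lower n p q hp hpd hq hqd hpr hqr w hlt hw
  · have hself : (boxplus n p q).map (starRingEnd ℂ) = boxplus n p q :=
      boxplus_selfconj n (selfconj_of_real_rooted p hp hpr) (selfconj_of_real_rooted q hq hqr)
    have hconj := conj_root hself hw
    have him : ((starRingEnd ℂ) w).im = -w.im := by simp
    exact walsh_lower n p q hp hpd hq hqd hpr hqr _ (by rw [him]; linarith) hconj

lemma sum_C_mul_X_pow_coeff_gt (n : ℕ) (c : ℕ → ℂ) {j : ℕ} (hj : n < j) :
    (∑ k ∈ Finset.range (n + 1), Polynomial.C (c k) * Polynomial.X ^ k).coeff j = 0 := by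
  rw [finset_sum_coeff]
  apply Finset.sum_eq_zero
  intro k hk
  have hk' := Finset.mem_range.1 hk
  rw [coeff_C_mul, coeff_X_pow, if_neg (by omega), mul_zero]

lemma dil_coeff_le (n : ℕ) (α : ℂ) (p : Polynomial ℂ) {j : ℕ} (hj : j ≤ n) :
    (dil n α p).coeff j = α ^ (n - j) * p.coeff j :=
  sum_C_mul_X_pow_coeff n (fun k => α ^ (n - k) * p.coeff k) hj

lemma dil_coeff_gt (n : ℕ) (α : ℂ) (p : Polynomial ℂ) {j : ℕ} (hj : n < j) :
    (dil n α p).coeff j = 0 :=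
  sum_C_mul_X_pow_coeff_gt n (fun k => α ^ (n - k) * p.coeff k) hj

lemma neg_one_pow_sq (k : ℕ) : ((-1 : ℂ)) ^ k * (-1 : ℂ) ^ k = 1 := by
  rw [← pow_add, show k + k = 2 * k by omega, pow_mul]
  norm_num

lemma dil_eval_even (m : ℕ) (p : Polynomial ℂ) (hpd : p.natDegree = 2 * m) (w : ℂ) :
    (dil (2 * m) (-1) p).eval w = p.eval (-w) := by
  unfold dil
  rw [eval_finset_sum]
  have hev : p.eval (-w) = ∑ j ∈ Finset.range (2 * m + 1), p.coeff j * (-w) ^ j := by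
    rw [Polynomial.eval_eq_sum_range (p := p) (-w), hpd]
  rw [hev]
  apply Finset.sum_congr rfl
  intro j hj
  have hj' : j ≤ 2 * m := by have := Finset.mem_range.1 hj; omega
  rw [eval_mul, eval_C, eval_pow, eval_X, neg_pow w j]
  have h : ((-1 : ℂ)) ^ (2 * m - j) * (-1 : ℂ) ^ j = 1 := by
    rw [← pow_add, show 2 * m - j + j = 2 * m by omega, pow_mul]
    norm_num
  have h2 : ((-1 : ℂ)) ^ j * (-1 : ℂ) ^ j = 1 := neg_one_pow_sq j
  linear_combination (p.coeff j * w ^ j * ((-1:ℂ)) ^ j) * h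
    + (- (p.coeff j * w ^ j * ((-1:ℂ)) ^ (2 * m - j))) * h2

lemma eC_dil (m k : ℕ) (p : Polynomial ℂ) (hk : k ≤ 2 * m) :
    eC (2 * m) k (dil (2 * m) (-1) p) = (-1) ^ k * eC (2 * m) k p := by
  unfold eC
  rw [dil_coeff_le (2 * m) (-1) p (show 2 * m - k ≤ 2 * m by omega)]
  rw [show 2 * m - (2 * m - k) = k by omega]

lemma boxplus_monic (n : ℕ) (p q : Polynomial ℂ) (hp : p.Monic) (hpd : p.natDegree = n)
    (hq : q.Monic) (hqd : q.natDegree = n) :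
    (boxplus n p q).Monic ∧ (boxplus n p q).natDegree = n := by
  unfold boxplus
  apply ofE_monic
  rw [Finset.Nat.antidiagonal_zero]
  have h1 : eC n 0 p = 1 := by
    unfold eC
    rw [Nat.sub_zero, pow_zero, one_mul, ← hpd]
    exact hp.coeff_natDegree
  have h2 : eC n 0 q = 1 := by
    unfold eC
    rw [Nat.sub_zero, pow_zero, one_mul, ← hqd]
    exact hq.coeff_natDegree
  simp [ffa_zero, h1, h2]

lemma sym_eC_eq (m k : ℕ) (p : Polynomial ℂ) (hk : k ≤ 2 * m) :
    eC (2 * m) k (sym (2 * m) p)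
      = ffa ((2*m : ℕ) : ℂ) k * ∑ ij ∈ Finset.HasAntidiagonal.antidiagonal k,
          eC (2*m) ij.1 p * eC (2*m) ij.2 (dil (2*m) (-1) p)
            / (ffa ((2*m : ℕ) : ℂ) ij.1 * ffa ((2*m : ℕ) : ℂ) ij.2) := by
  unfold sym boxplus eC
  rw [ofE_coeff (2*m) _ (show 2*m - k ≤ 2*m by omega)]
  rw [show 2*m - (2*m - k) = k by omega]
  rw [← mul_assoc, neg_one_pow_sq, one_mul]

lemma sym_even (m : ℕ) (p : Polynomial ℂ) :
    ∀ k ≤ 2 * m, Odd k → eC (2 * m) k (sym (2 * m) p) = 0 := by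
  intro k hk hodd
  rw [sym_eC_eq m k p hk]
  have hS : (∑ ij ∈ Finset.HasAntidiagonal.antidiagonal k,
      eC (2*m) ij.1 p * eC (2*m) ij.2 (dil (2*m) (-1) p)
        / (ffa ((2*m : ℕ) : ℂ) ij.1 * ffa ((2*m : ℕ) : ℂ) ij.2)) = 0 := by
    set G : ℕ × ℕ → ℂ := fun ij =>
      eC (2*m) ij.1 p * eC (2*m) ij.2 (dil (2*m) (-1) p)
        / (ffa ((2*m : ℕ) : ℂ) ij.1 * ffa ((2*m : ℕ) : ℂ) ij.2) with hG
    have hswap : ∑ ij ∈ Finset.HasAntidiagonal.antidiagonal k, G ij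
        = ∑ ij ∈ Finset.HasAntidiagonal.antidiagonal k, G ij.swap := by
      conv_lhs => rw [← Finset.HasAntidiagonal.map_swap_antidiagonal (n := k)]
      rw [Finset.sum_map]
      rfl
    have hself : (∑ ij ∈ Finset.HasAntidiagonal.antidiagonal k, G ij)
        + (∑ ij ∈ Finset.HasAntidiagonal.antidiagonal k, G ij) = 0 := by
      nth_rewrite 1 [hswap]
      rw [← Finset.sum_add_distrib]
      apply Finset.sum_eq_zero
      intro ij hij
      have hijk : ij.1 + ij.2 = k := Finset.HasAntidiagonal.mem_antidiagonal.1 hij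
      obtain ⟨i, j⟩ := ij
      have hi : i ≤ 2*m := by simp at hijk; omega
      have hj : j ≤ 2*m := by simp at hijk; omega
      simp only [hG, Prod.swap_prod_mk]
      rw [eC_dil m i p hi, eC_dil m j p hj]
      have hpar : ((-1:ℂ)) ^ j + ((-1:ℂ)) ^ i = 0 := by
        rcases Nat.even_or_odd i with he | ho
        · have hodd2 : Odd j := by
            rcases he with ⟨d, hd⟩
            rcases hodd with ⟨c, hc⟩
            refine ⟨c - d, by simp at hijk; omega⟩
          rw [he.neg_one_pow, hodd2.neg_one_pow]
          ring
        · have heven2 : Even j := by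
            rcases ho with ⟨d, hd⟩
            rcases hodd with ⟨c, hc⟩
            refine ⟨c - d, by simp at hijk; omega⟩
          rw [ho.neg_one_pow, heven2.neg_one_pow]
          ring
      have hfi : ffa ((2*m : ℕ) : ℂ) i ≠ 0 := ffa_ne_zero hi
      have hfj : ffa ((2*m : ℕ) : ℂ) j ≠ 0 := ffa_ne_zero hj
      push_cast at hfi hfj ⊢
      field_simp
      linear_combination (eC (2*m) j p * eC (2*m) i p) * hpar
    exact add_self_eq_zero.1 hself
  rw [hS, mul_zero]

lemma Qm_comp_sq (m : ℕ) (r : Polynomial ℂ) (hmon : r.Monic) (hdeg : r.natDegree = 2 * m)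
    (heven : ∀ k ≤ 2 * m, Odd k → eC (2 * m) k r = 0) :
    (Qm m r).comp (X ^ 2) = r := by
  have hQexp : (Qm m r).comp (X ^ 2)
      = ∑ k ∈ Finset.range (m + 1), C (eC (2 * m) (2 * k) r) * X ^ (2 * (m - k)) := by
    rw [Qm, ofE]
    rw [Polynomial.comp, Polynomial.eval₂_finset_sum]
    apply Finset.sum_congr rfl
    intro k _
    rw [← Polynomial.comp, Polynomial.mul_comp, Polynomial.C_comp, Polynomial.pow_comp,
      Polynomial.X_comp, ← pow_mul]
    rw [← mul_assoc, neg_one_pow_sq, one_mul]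
  ext N
  rw [hQexp, finset_sum_coeff]
  have hterm : ∀ k, (C (eC (2 * m) (2 * k) r) * X ^ (2 * (m - k))).coeff N
      = eC (2 * m) (2 * k) r * (if N = 2 * (m - k) then 1 else 0) := by
    intro k
    rw [coeff_C_mul, coeff_X_pow]
  by_cases hN : N ≤ 2 * m
  · have hrc : r.coeff N = (-1 : ℂ) ^ (2 * m - N) * eC (2 * m) (2 * m - N) r := by
      unfold eC
      rw [show 2 * m - (2 * m - N) = N by omega, ← mul_assoc, neg_one_pow_sq, one_mul]
    rcases Nat.even_or_odd N with heN | hoN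
    · obtain ⟨u, hu⟩ := heN
      have hum : u ≤ m := by omega
      rw [Finset.sum_eq_single (m - u)]
      · rw [hterm, if_pos (by omega), mul_one]
        rw [hrc]
        have hevsub : Even (2 * m - N) := ⟨m - u, by omega⟩
        rw [hevsub.neg_one_pow, one_mul]
        congr 1
        omega
      · intro k hk hkne
        rw [hterm, if_neg (by have := Finset.mem_range.1 hk; omega), mul_zero]
      · intro hmem
        exact absurd (Finset.mem_range.2 (by omega)) hmem
    · have hz : r.coeff N = 0 := by
        rw [hrc, heven (2 * m - N) (by omega) (by
          rcases hoN with ⟨c, hc⟩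
          exact ⟨m - c - 1, by omega⟩), mul_zero]
      rw [hz]
      apply Finset.sum_eq_zero
      intro k hk
      rw [hterm, if_neg (by
        rcases hoN with ⟨c, hc⟩
        omega), mul_zero]
  · push_neg at hN
    rw [coeff_eq_zero_of_natDegree_lt (by omega : r.natDegree < N)]
    apply Finset.sum_eq_zero
    intro k hk
    rw [hterm, if_neg (by have := Finset.mem_range.1 hk; omega), mul_zero]

/-- for a monic real-rooted polynomial of degree 2m, `Q_m(Sym(p))` is a
monic degree-m polynomial with all roots in `ℝ≥0`. -/
theorem stmt4 (m : ℕ) (hm : 1 ≤ m) (p : Polynomial ℂ)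
    (hpm : p.Monic) (hpd : p.natDegree = 2 * m)
    (hp : ∀ z : ℂ, p.IsRoot z → z.im = 0) :
    (Qm m (sym (2 * m) p)).Monic ∧ (Qm m (sym (2 * m) p)).natDegree = m ∧
      ∀ z : ℂ, (Qm m (sym (2 * m) p)).IsRoot z → z.im = 0 ∧ 0 ≤ z.re := by

  set q : Polynomial ℂ := dil (2 * m) (-1) p with hqdef
  have hqc : q.coeff (2 * m) = 1 := by
    rw [hqdef, dil_coeff_le (2 * m) (-1) p le_rfl]
    rw [Nat.sub_self, pow_zero, one_mul, ← hpd]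
    exact hpm.coeff_natDegree
  have hqdegle : q.natDegree ≤ 2 * m :=
    natDegree_le_iff_coeff_eq_zero.2 fun N hN => dil_coeff_gt (2 * m) (-1) p hN
  have hqm : q.Monic := monic_of_natDegree_le_of_coeff_eq_one _ hqdegle hqc
  have hqd : q.natDegree = 2 * m :=
    le_antisymm hqdegle (le_natDegree_of_ne_zero (by rw [hqc]; exact one_ne_zero))
  have hqr : ∀ w, q.IsRoot w → w.im = 0 := by
    intro w hw
    have heval := dil_eval_even m p hpd w
    rw [hqdef] at hw
    unfold IsRoot at hw
    rw [heval] at hw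
    have := hp (-w) hw
    simpa using this
  set r : Polynomial ℂ := sym (2 * m) p with hrdef
  have hrb : r = boxplus (2 * m) p q := rfl
  have hrmon := boxplus_monic (2 * m) p q hpm hpd hqm hqd
  have hrroots : ∀ w, r.IsRoot w → w.im = 0 := by
    rw [hrb]
    exact walsh_real (2 * m) p q hpm hpd hqm hqd hp hqr
  have hreven : ∀ k ≤ 2 * m, Odd k → eC (2 * m) k r = 0 := sym_even m p
  have hrmon' : r.Monic := by rw [hrb]; exact hrmon.1
  have hrdeg : r.natDegree = 2 * m := by rw [hrb]; exact hrmon.2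
  have hQmon : (Qm m r).Monic ∧ (Qm m r).natDegree = m := by
    apply ofE_monic
    have h0 : eC (2 * m) 0 r = 1 := by
      unfold eC
      rw [Nat.sub_zero, pow_zero, one_mul, ← hrdeg]
      exact hrmon'.coeff_natDegree
    rw [Nat.mul_zero, h0, pow_zero, one_mul]
  have hcomp : (Qm m r).comp (X ^ 2) = r := Qm_comp_sq m r hrmon' hrdeg hreven
  refine ⟨hQmon.1, hQmon.2, ?_⟩
  intro z hz
  obtain ⟨w, hw⟩ : ∃ w : ℂ, w ^ 2 = z := by
    have hdeg2 : (X ^ 2 - C z : Polynomial ℂ).degree ≠ 0 := by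
      rw [Polynomial.degree_X_pow_sub_C (by omega : 0 < 2)]
      exact by norm_num
    obtain ⟨w, hwr⟩ := IsAlgClosed.exists_root _ hdeg2
    refine ⟨w, ?_⟩
    have h2 : w ^ 2 - z = 0 := by simpa using hwr
    linear_combination h2
  have hrw : r.IsRoot w := by
    unfold IsRoot
    have h1 : r.eval w = (Qm m r).eval z := by
      conv_lhs => rw [← hcomp]
      rw [eval_comp, eval_pow, eval_X, hw]
    rw [h1]
    exact hz
  have hwim : w.im = 0 := hrroots w hrw
  constructor
  · rw [← hw]
    simp [pow_two, Complex.mul_im, hwim]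
  · rw [← hw]
    rw [pow_two]
    simp [Complex.mul_re, hwim]
    exact mul_self_nonneg w.re

end FFP
end
end

section
/- Let m ≥ 1 and let p, q be even monic polynomials of degree 2m. Then Q_m(p ⊞_{2m} q) = Q_m(p) ⊞^{−1/2}_m Q_m(q), where ⊞^{−1/2}_m is the (m,−1/2)-rectangular convolution. -/
open Polynomial Finset

noncomputable section

namespace FFP

/-- The `(m,α)`-rectangular convolution. -/
def rect (m : ℕ) (α : ℝ) (p q : Polynomial ℂ) : Polynomial ℂ :=
  ofE m fun k => ffa (m : ℂ) k * ffa ((m : ℂ) + (α : ℂ)) k *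
    ∑ ij ∈ Finset.HasAntidiagonal.antidiagonal k,
      eC m ij.1 p * eC m ij.2 q /
        (ffa (m : ℂ) ij.1 * ffa ((m : ℂ) + (α : ℂ)) ij.1 *
          ffa (m : ℂ) ij.2 * ffa ((m : ℂ) + (α : ℂ)) ij.2)


lemma eC_ofE (n : ℕ) (f : ℕ → ℂ) (k : ℕ) (hk : k ≤ n) : eC n k (ofE n f) = f k := by
  unfold eC ofE
  rw [Polynomial.finset_sum_coeff, Finset.sum_eq_single k]
  · simp only [Polynomial.coeff_C_mul, Polynomial.coeff_X_pow, if_pos rfl, mul_one,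
      ← mul_assoc, ← mul_pow]
    norm_num
  · intro j hj hjk
    simp only [Polynomial.coeff_C_mul, Polynomial.coeff_X_pow]
    rw [if_neg, mul_zero]
    simp only [Finset.mem_range] at hj
    omega
  · intro h
    exact absurd (Finset.mem_range.mpr (by omega)) h

lemma ffa_double (x : ℂ) (k : ℕ) :
    ffa (2*x) (2*k) = 4^k * ffa x k * ffa (x - 1/2) k := by
  induction k with
  | zero => simp [ffa]
  | succ k ih =>
      have h2 : 2*(k+1) = (2*k) + 1 + 1 := by ring
      rw [h2]
      simp only [ffa] at ih ⊢
      simp only [Finset.prod_range_succ]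
      rw [ih]
      push_cast
      ring

lemma ffa_nat_ne_zero (m a : ℕ) (h : a ≤ m) : ffa (m : ℂ) a ≠ 0 := by
  unfold ffa
  rw [Finset.prod_ne_zero_iff]
  intro i hi
  simp only [Finset.mem_range] at hi
  intro hz
  have : (m : ℂ) = (i : ℂ) := by linear_combination hz
  have : m = i := by exact_mod_cast this
  omega

lemma ffa_half_ne_zero (m a : ℕ) : ffa ((m : ℂ) - 1/2) a ≠ 0 := by
  unfold ffa
  rw [Finset.prod_ne_zero_iff]
  intro i hi hz
  have h1 : ((2*m : ℕ) : ℂ) = ((2*i + 1 : ℕ) : ℂ) := by push_cast; linear_combination 2*hz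
  have : 2*m = 2*i+1 := by exact_mod_cast h1
  omega

lemma ofE_congr {n : ℕ} {f g : ℕ → ℂ} (h : ∀ k ≤ n, f k = g k) : ofE n f = ofE n g := by
  unfold ofE
  refine Finset.sum_congr rfl fun k hk => ?_
  rw [Finset.mem_range] at hk
  rw [h k (by omega)]

lemma sum_even_support (k : ℕ) (g : ℕ → ℂ) (hg : ∀ i ≤ 2*k, Odd i → g i = 0) :
    ∑ i ∈ Finset.range (2*k+1), g i = ∑ a ∈ Finset.range (k+1), g (2*a) := by
  have h1 : ∑ a ∈ Finset.range (k+1), g (2*a)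
      = ∑ i ∈ (Finset.range (k+1)).image (2*·), g i := by
    rw [Finset.sum_image]
    intro x _ y _ h
    dsimp only at h
    omega
  rw [h1]
  refine (Finset.sum_subset ?_ ?_).symm
  · intro i hi
    obtain ⟨a, ha, rfl⟩ := Finset.mem_image.mp hi
    rw [Finset.mem_range] at ha ⊢
    omega
  · intro i hi hni
    rw [Finset.mem_range] at hi
    apply hg i (by omega)
    rcases Nat.even_or_odd i with ⟨a, rfl⟩ | ho
    · exact absurd (Finset.mem_image.mpr ⟨a, Finset.mem_range.mpr (by omega), by omega⟩) hni
    · exact ho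

/-- for even monic polynomials of degree 2m,
`Q_m(p ⊞_{2m} q) = Q_m(p) ⊞^{-1/2}_m Q_m(q)`. -/
theorem stmt6 (m : ℕ) (hm : 1 ≤ m) (p q : Polynomial ℂ)
    (hpm : p.Monic) (hpd : p.natDegree = 2 * m) (hpe : IsEvenP m p)
    (hqm : q.Monic) (hqd : q.natDegree = 2 * m) (hqe : IsEvenP m q) :
    Qm m (boxplus (2 * m) p q) = rect m (-1 / 2) (Qm m p) (Qm m q) := by
  have hc : ((2*m : ℕ) : ℂ) = 2*(m:ℂ) := by push_cast; ring
  have hα : (m:ℂ) + ((-1/2 : ℝ) : ℂ) = (m:ℂ) - 1/2 := by push_cast; ring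
  unfold Qm rect
  refine ofE_congr fun k hk => ?_
  rw [boxplus, eC_ofE _ _ _ (by omega)]
  rw [Finset.Nat.sum_antidiagonal_eq_sum_range_succ_mk,
      Finset.Nat.sum_antidiagonal_eq_sum_range_succ_mk]
  rw [sum_even_support k _ ?hvan]
  case hvan =>
    intro i hi hoi
    simp [hpe i (by omega) hoi]
  simp only [Finset.mul_sum]
  refine Finset.sum_congr rfl fun a ha => ?_
  rw [Finset.mem_range] at ha
  obtain ⟨b, rfl⟩ : ∃ b, k = a + b := ⟨k - a, by omega⟩
  rw [show 2*(a+b) - 2*a = 2*b from by omega, show a + b - a = b from by omega]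
  rw [eC_ofE _ _ a (by omega), eC_ofE _ _ b (by omega)]
  rw [hc, ffa_double, ffa_double, ffa_double, hα]
  have hFa : ffa (↑m) a ≠ 0 := ffa_nat_ne_zero m a (by omega)
  have hFb : ffa (↑m) b ≠ 0 := ffa_nat_ne_zero m b (by omega)
  have hGa : ffa ((m:ℂ) - 1/2) a ≠ 0 := ffa_half_ne_zero m a
  have hGb : ffa ((m:ℂ) - 1/2) b ≠ 0 := ffa_half_ne_zero m b
  have h4a : (4:ℂ)^a ≠ 0 := pow_ne_zero _ (by norm_num)
  have h4b : (4:ℂ)^b ≠ 0 := pow_ne_zero _ (by norm_num)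
  rw [pow_add (4:ℂ)]
  field_simp
  have hq : ((m:ℂ)*2 - 1)/2 = (m:ℂ) - 1/2 := by ring
  rw [hq] at *
  rw [div_eq_div_iff (by repeat' apply mul_ne_zero; all_goals assumption) (by repeat' apply mul_ne_zero; all_goals assumption)]
  ring


end FFP
end
end
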